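/- arXiv:math/0505653 — 4 statements merged into one kernel-verified Lean document; each statement's English description precedes it below -/
import Mathlib

section
/- Let G be a group and let ψ and ψ' be two cohomologous 2-cocycles on G with values in ℂˣ. Then an element g ∈ G is ψ-regular if and only if it is ψ'-regular. -/
/-- A 2-cocycle on `G` with values in `ℂˣ` (trivial action). -/
def IsTwoCocycle {G : Type*} [Group G] (ψ : G → G → ℂˣ) : Prop :=
  ∀ g h k : G, ψ g h * ψ (g * h) k = ψ h k * ψ g (h * k)

/-- An element `g` is `ψ`-regular if `ψ(g,h) = ψ(h,g)` for every `h` in the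
centralizer of `g`. -/
def IsPsiRegular {G : Type*} [Group G] (ψ : G → G → ℂˣ) (g : G) : Prop :=
  ∀ h ∈ Subgroup.centralizer {g}, ψ g h = ψ h g

/-- Two 2-cocycles are cohomologous if they differ by a coboundary. -/
def IsCohomologous {G : Type*} [Group G] (ψ ψ' : G → G → ℂˣ) : Prop :=
  ∃ μ : G → ℂˣ, ∀ g h : G, ψ' g h = μ g * μ h * (μ (g * h))⁻¹ * ψ g h

theorem regular_iff_of_cohomologous {G : Type*} [Group G]
    (ψ ψ' : G → G → ℂˣ) (hψ : IsTwoCocycle ψ) (hψ' : IsTwoCocycle ψ')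
    (h : IsCohomologous ψ ψ') (g : G) :
    IsPsiRegular ψ g ↔ IsPsiRegular ψ' g := by
  obtain ⟨μ, hμ⟩ := h
  constructor
  · intro hr x hx
    have hc : g * x = x * g := hx g rfl
    rw [hμ g x, hμ x g, hr x hx, hc, mul_comm (μ g) (μ x)]
  · intro hr x hx
    have hc : g * x = x * g := hx g rfl
    have := hr x hx
    rw [hμ g x, hμ x g, hc, mul_comm (μ g) (μ x)] at this
    exact mul_left_cancel this
end

section
/- Let G be a finite group and ψ a 2-cocycle on G with values in ℂˣ. An element g ∈ G is ψ-regular if and only if there exists a finite-dimensional irreducible module τ over the twisted group algebra ℂ_ψG such that χ_τ(g) ≠ 0. -/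
/-- A finite-dimensional module over the twisted group algebra `ℂ_ψ G`,
packaged as a projective representation: a finite-dimensional complex vector
space `V` together with operators `ρ g` satisfying
`ρ g * ρ h = ψ(g,h) • ρ(g h)` and (unitality of the module) `ρ 1 = ψ(1,1) • 1`. -/
structure TwistedGroupAlgebraModule (G : Type*) [Group G] (ψ : G → G → ℂˣ) where
  V : Type
  [isAddCommGroup : AddCommGroup V]
  [isModule : Module ℂ V]
  [isFinDim : FiniteDimensional ℂ V]
  ρ : G → Module.End ℂ V
  mul_eq : ∀ g h : G, ρ g * ρ h = (ψ g h : ℂ) • ρ (g * h)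
  one_eq : ρ 1 = (ψ 1 1 : ℂ) • 1

attribute [instance] TwistedGroupAlgebraModule.isAddCommGroup
  TwistedGroupAlgebraModule.isModule TwistedGroupAlgebraModule.isFinDim

/-- The character of a module over `ℂ_ψ G`: `χ_τ(g) = tr (g|_τ)`. -/
noncomputable def TwistedGroupAlgebraModule.char {G : Type*} [Group G]
    {ψ : G → G → ℂˣ} (τ : TwistedGroupAlgebraModule G ψ) (g : G) : ℂ :=
  LinearMap.trace ℂ τ.V (τ.ρ g)

/-- A `ℂ_ψ G`-module is irreducible if it is nonzero and has no nontrivial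
invariant subspaces. -/
def TwistedGroupAlgebraModule.Irreducible {G : Type*} [Group G]
    {ψ : G → G → ℂˣ} (τ : TwistedGroupAlgebraModule G ψ) : Prop :=
  Nontrivial τ.V ∧
    ∀ p : Submodule ℂ τ.V, (∀ g : G, p.map (τ.ρ g) ≤ p) → p = ⊥ ∨ p = ⊤

/-!
Conjugating `τ g` by the invertible operator `τ h` gives `ψ(h,g)/ψ(hgh⁻¹,h) • τ(hgh⁻¹)`. For `h`
centralising `g` this is `ψ(h,g)/ψ(g,h) • τ g`, so invariance of the trace forces `ψ(h,g) = ψ(g,h)`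
as soon as `χ_τ(g) ≠ 0`.

Conversely, for regular `g` the twisted class sum `∑ₕ τ(h) τ(g) τ(h)⁻¹` is nonzero on the regular
module (its `δ₁`-column has entry `|C_G(g)| ψ(g,1)` at `g`). It commutes with the action, so by
Maschke it stays nonzero on some irreducible constituent, where Schur makes it a nonzero scalar;
its trace there is `|G| χ(g)`.
-/

theorem Units.mul_mul_inv_eq_of_val_eq_smul {R A : Type*} [CommSemiring R] [Semiring A]
    [Algebra R A] {a b : Aˣ} {c : R} (hab : (a : A) = c • (b : A)) (x : A) :
    a * x * ↑a⁻¹ = b * x * ↑b⁻¹ := by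
  have hscalar : (↑b⁻¹ * a : A) = algebraMap R A c := by
    rw [hab, mul_smul_comm, Units.inv_mul, Algebra.algebraMap_eq_smul_one]
  calc (a : A) * x * ↑a⁻¹ = b * (↑b⁻¹ * a) * x * ↑a⁻¹ := by
        rw [← mul_assoc, Units.mul_inv, one_mul]
    _ = b * x * (↑b⁻¹ * a) * ↑a⁻¹ := by
        rw [hscalar, mul_assoc (b : A) _ x, Algebra.commutes, ← mul_assoc]
    _ = b * x * ↑b⁻¹ := by simp [mul_assoc]

theorem LinearMap.isProj_sum_smul {R M ι : Type*} [CommSemiring R] [AddCommMonoid M]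
    [Module R M] {p : Submodule R M} {P : ι → Module.End R M} (hP : ∀ i, IsProj p (P i))
    (s : Finset ι) {w : ι → R} (hw : ∑ i ∈ s, w i = 1) : IsProj p (∑ i ∈ s, w i • P i) where
  map_mem x := by
    rw [LinearMap.sum_apply]
    exact p.sum_mem fun i _ => p.smul_mem _ ((hP i).map_mem x)
  map_id x hx := by
    simp only [LinearMap.sum_apply, LinearMap.smul_apply, (hP _).map_id x hx, ← Finset.sum_smul,
      hw, one_smul]

theorem IsTwoCocycle.map_one_left {G : Type*} [Group G] {ψ : G → G → ℂˣ} (hψ : IsTwoCocycle ψ)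
    (k : G) : ψ 1 k = ψ 1 1 := by
  simpa using (hψ 1 1 k).symm

namespace TwistedGroupAlgebraModule

variable {G : Type*} [Group G] {ψ : G → G → ℂˣ} (τ : TwistedGroupAlgebraModule G ψ)

theorem rho_mul_rho_inv (h : G) : τ.ρ h * τ.ρ h⁻¹ = ((ψ h h⁻¹ : ℂ) * ψ 1 1) • 1 := by
  rw [τ.mul_eq, mul_inv_cancel, τ.one_eq, smul_smul]

theorem rho_mul_smul_rho_inv (h : G) :
    τ.ρ h * (((ψ h h⁻¹ : ℂ) * ψ 1 1)⁻¹ • τ.ρ h⁻¹) = 1 := by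
  rw [mul_smul_comm, rho_mul_rho_inv, smul_smul, inv_mul_cancel₀ (by simp), one_smul]

noncomputable def rhoUnit (h : G) : (Module.End ℂ τ.V)ˣ where
  val := τ.ρ h
  inv := ((ψ h h⁻¹ : ℂ) * ψ 1 1)⁻¹ • τ.ρ h⁻¹
  val_inv := τ.rho_mul_smul_rho_inv h
  -- a right inverse is two-sided because `V` is finite-dimensional
  inv_val := mul_eq_one_comm.mp (τ.rho_mul_smul_rho_inv h)

theorem val_rhoUnit (h : G) : (τ.rhoUnit h : Module.End ℂ τ.V) = τ.ρ h :=
  rfl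

noncomputable def conj (h : G) (f : Module.End ℂ τ.V) : Module.End ℂ τ.V :=
  τ.rhoUnit h * f * ↑(τ.rhoUnit h)⁻¹

theorem conj_apply (h : G) (f : Module.End ℂ τ.V) (v : τ.V) :
    τ.conj h f v = τ.ρ h (f ((((ψ h h⁻¹ : ℂ) * ψ 1 1)⁻¹ • τ.ρ h⁻¹) v)) :=
  rfl

theorem trace_conj (h : G) (f : Module.End ℂ τ.V) :
    LinearMap.trace ℂ τ.V (τ.conj h f) = LinearMap.trace ℂ τ.V f :=
  LinearMap.trace_conj ..

theorem conj_mul (k h : G) (f : Module.End ℂ τ.V) :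
    τ.conj (k * h) f = τ.conj k (τ.conj h f) := by
  have hunit : ((τ.rhoUnit k * τ.rhoUnit h : (Module.End ℂ τ.V)ˣ) : Module.End ℂ τ.V) =
      (ψ k h : ℂ) • (τ.rhoUnit (k * h) : Module.End ℂ τ.V) :=
    τ.mul_eq k h
  rw [conj, ← Units.mul_mul_inv_eq_of_val_eq_smul hunit]
  simp only [conj, Units.val_mul, mul_inv_rev, mul_assoc]

theorem rho_mul_conj (k h : G) (f : Module.End ℂ τ.V) :
    τ.ρ k * τ.conj h f = τ.conj (k * h) f * τ.ρ k := by
  rw [conj_mul]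
  exact (Units.inv_mul_cancel_right (τ.ρ k * τ.conj h f) (τ.rhoUnit k)).symm

theorem conj_rho (h g : G) :
    τ.conj h (τ.ρ g) = ((ψ h g : ℂ) / ψ (h * g * h⁻¹) h) • τ.ρ (h * g * h⁻¹) := by
  have hrho : τ.ρ h * τ.ρ g = ((ψ h g : ℂ) / ψ (h * g * h⁻¹) h) • (τ.ρ (h * g * h⁻¹) * τ.ρ h) := by
    rw [τ.mul_eq, τ.mul_eq, inv_mul_cancel_right, smul_smul, div_mul_cancel₀ _ (by simp)]
  rw [conj, val_rhoUnit, hrho, smul_mul_assoc, mul_assoc (τ.ρ _), ← val_rhoUnit τ h,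
    Units.mul_inv, mul_one]

theorem conj_rho_of_commute {g h : G} (hgh : Commute h g) :
    τ.conj h (τ.ρ g) = ((ψ h g : ℂ) / ψ g h) • τ.ρ g := by
  rw [conj_rho, hgh.eq, mul_inv_cancel_right]

theorem isPsiRegular_of_char_ne_zero {g : G} (hχ : τ.char g ≠ 0) : IsPsiRegular ψ g := by
  intro h hh
  have htrace := τ.trace_conj h (τ.ρ g)
  rw [τ.conj_rho_of_commute (Subgroup.mem_centralizer_singleton_iff.1 hh), map_smul,
    smul_eq_mul] at htrace
  have hratio : (ψ h g : ℂ) / ψ g h = 1 := (mul_eq_right₀ hχ).1 htrace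
  exact (Units.ext ((div_eq_one_iff_eq (by simp)).1 hratio)).symm

section ClassSum

variable [Fintype G]

noncomputable def conjSum (f : Module.End ℂ τ.V) : Module.End ℂ τ.V :=
  ∑ h, τ.conj h f

theorem commute_rho_conjSum (k : G) (f : Module.End ℂ τ.V) : Commute (τ.ρ k) (τ.conjSum f) := by
  simp only [Commute, SemiconjBy, conjSum, Finset.mul_sum, Finset.sum_mul, rho_mul_conj]
  exact Fintype.sum_equiv (Equiv.mulLeft k) _ _ fun _ => rfl

theorem trace_conjSum (f : Module.End ℂ τ.V) :
    LinearMap.trace ℂ τ.V (τ.conjSum f) = Fintype.card G * LinearMap.trace ℂ τ.V f := by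
  simp [conjSum, trace_conj]

end ClassSum

def Invariant (p : Submodule ℂ τ.V) : Prop :=
  ∀ g : G, p.map (τ.ρ g) ≤ p

variable {τ}

theorem Invariant.rho_mem {p : Submodule ℂ τ.V} (hp : τ.Invariant p) (g : G) {v : τ.V}
    (hv : v ∈ p) : τ.ρ g v ∈ p :=
  hp g (Submodule.mem_map_of_mem hv)

theorem invariant_ker_of_commute {f : Module.End ℂ τ.V} (hf : ∀ k, Commute (τ.ρ k) f) :
    τ.Invariant (LinearMap.ker f) := by
  rintro k _ ⟨v, hv, rfl⟩
  simp only [SetLike.mem_coe, LinearMap.mem_ker] at hv ⊢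
  rw [← Module.End.mul_apply, ← (hf k).eq, Module.End.mul_apply, hv, map_zero]

theorem Irreducible.exists_eq_smul_one (hτ : τ.Irreducible) {f : Module.End ℂ τ.V}
    (hf : ∀ k, Commute (τ.ρ k) f) : ∃ c : ℂ, f = c • 1 := by
  have := hτ.1
  obtain ⟨c, hc⟩ := Module.End.exists_eigenvalue f
  refine ⟨c, ?_⟩
  have hker : τ.Invariant (LinearMap.ker (f - c • 1)) :=
    invariant_ker_of_commute fun k => (hf k).sub_right ((Commute.one_right _).smul_right c)
  rcases hτ.2 _ hker with hbot | htop
  · exact absurd (Module.End.eigenspace_def.trans hbot) hc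
  · exact sub_eq_zero.1 (LinearMap.ker_eq_top.1 htop)

-- an `abbrev`, so that `(τ.restrict p hp).V` unfolds to `p` during elaboration
variable (τ) in
noncomputable abbrev restrict (p : Submodule ℂ τ.V) (hp : τ.Invariant p) :
    TwistedGroupAlgebraModule G ψ where
  V := p
  ρ g := (τ.ρ g).restrict fun _ => hp.rho_mem g
  mul_eq g h := by
    ext x
    simpa using LinearMap.congr_fun (τ.mul_eq g h) x
  one_eq := by
    ext x
    simpa using LinearMap.congr_fun τ.one_eq x

section Decomposition

variable [Fintype G]

theorem Irreducible.char_ne_zero_of_conjSum_ne_zero (hτ : τ.Irreducible) {g : G}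
    (hg : τ.conjSum (τ.ρ g) ≠ 0) : τ.char g ≠ 0 := by
  obtain ⟨c, hc⟩ := hτ.exists_eq_smul_one (τ.commute_rho_conjSum · _)
  have := hτ.1
  have htrace : c * Module.finrank ℂ τ.V = Fintype.card G * τ.char g := by
    rw [char, ← trace_conjSum, hc, map_smul, LinearMap.trace_one, smul_eq_mul]
  intro hχ
  rw [hχ, mul_zero] at htrace
  rcases mul_eq_zero.1 htrace with rfl | hdim
  · exact hg (by rw [hc, zero_smul])
  · exact Module.finrank_pos.ne' (Nat.cast_eq_zero.1 hdim)

theorem exists_invariant_isCompl {p : Submodule ℂ τ.V} (hp : τ.Invariant p) :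
    ∃ q, τ.Invariant q ∧ IsCompl p q := by
  obtain ⟨q, hq⟩ := p.exists_isCompl
  have hP : LinearMap.IsProj p (p.projection q hq) := by
    simpa only [Submodule.range_projection] using
      LinearMap.IsIdempotentElem.isProj_range _ (Submodule.isIdempotentElem_projection hq)
  have hconj (h : G) : LinearMap.IsProj p (τ.conj h (p.projection q hq)) :=
    ⟨fun x => hp.rho_mem h (hP.map_mem _), fun x hx => by
      rw [conj_apply, hP.map_id _ ?_]
      · exact LinearMap.congr_fun (τ.rhoUnit h).mul_inv x
      · exact p.smul_mem _ (hp.rho_mem _ hx)⟩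
  have he : LinearMap.IsProj p ((Fintype.card G : ℂ)⁻¹ • τ.conjSum (p.projection q hq)) := by
    rw [conjSum, Finset.smul_sum]
    exact LinearMap.isProj_sum_smul hconj _ (by simp)
  exact ⟨_,
    invariant_ker_of_commute fun k => (τ.commute_rho_conjSum k _).smul_right _, he.isCompl⟩

theorem coe_restrict_conjSum_rho_apply {p : Submodule ℂ τ.V} (hp : τ.Invariant p) (g : G)
    (x : p) : p.subtype ((τ.restrict p hp).conjSum ((τ.restrict p hp).ρ g) x) =
      τ.conjSum (τ.ρ g) x := by
  rw [conjSum, conjSum, LinearMap.sum_apply, LinearMap.sum_apply, map_sum]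
  rfl

theorem restrict_conjSum_rho_ne_zero {p : Submodule ℂ τ.V} (hp : τ.Invariant p) {g : G}
    (hpg : ¬p ≤ LinearMap.ker (τ.conjSum (τ.ρ g))) :
    (τ.restrict p hp).conjSum ((τ.restrict p hp).ρ g) ≠ 0 := by
  obtain ⟨x, hx, hgx⟩ := SetLike.not_le_iff_exists.1 hpg
  intro h0
  apply hgx
  rw [LinearMap.mem_ker, ← coe_restrict_conjSum_rho_apply hp g ⟨x, hx⟩, h0]
  rfl

theorem exists_irreducible_char_ne_zero_of_conjSum_ne_zero (τ : TwistedGroupAlgebraModule G ψ)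
    {g : G} (hg : τ.conjSum (τ.ρ g) ≠ 0) :
    ∃ σ : TwistedGroupAlgebraModule G ψ, σ.Irreducible ∧ σ.char g ≠ 0 := by
  induction hn : Module.finrank ℂ τ.V using Nat.strong_induction_on generalizing τ with
  | _ n ih =>
    by_cases hτ : τ.Irreducible
    · exact ⟨τ, hτ, hτ.char_ne_zero_of_conjSum_ne_zero hg⟩
    have : Nontrivial τ.V := by
      by_contra hV
      rw [not_nontrivial_iff_subsingleton] at hV
      exact hg (Subsingleton.elim _ _)
    simp only [Irreducible, not_and, not_forall, not_or] at hτ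
    obtain ⟨p, hp, hp_bot, hp_top⟩ := hτ this
    obtain ⟨q, hq, hpq⟩ := exists_invariant_isCompl hp
    have descend (W : Submodule ℂ τ.V) (hW : τ.Invariant W) (hW_top : W ≠ ⊤)
        (hWg : ¬W ≤ LinearMap.ker (τ.conjSum (τ.ρ g))) :
        ∃ σ : TwistedGroupAlgebraModule G ψ, σ.Irreducible ∧ σ.char g ≠ 0 :=
      ih _ (hn ▸ Submodule.finrank_lt hW_top) _ (restrict_conjSum_rho_ne_zero hW hWg) rfl
    by_cases hpg : p ≤ LinearMap.ker (τ.conjSum (τ.ρ g))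
    · refine descend q hq (fun hq_top => hp_bot (disjoint_top.1 (hq_top ▸ hpq.disjoint))) ?_
      intro hqg
      exact hg (LinearMap.ker_eq_top.1 (top_unique (hpq.sup_eq_top ▸ sup_le hpg hqg)))
    · exact descend p hp hp_top hpg

end Decomposition

section Regular

-- The left regular module `(y • f)(x) = ψ(y, y⁻¹x) f(y⁻¹x)`, carried by `ι → ℂ` for some
-- `ι ≃ G` because the carrier has to live in `Type`.
variable (ψ) in
noncomputable abbrev regular (hψ : IsTwoCocycle ψ) {ι : Type} [Fintype ι] (e : G ≃ ι) :
    TwistedGroupAlgebraModule G ψ where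
  V := ι → ℂ
  ρ y :=
    { toFun := fun f i => ψ y (y⁻¹ * e.symm i) * f (e (y⁻¹ * e.symm i))
      map_add' := fun _ _ => funext fun _ => mul_add _ _ _
      map_smul' := fun _ _ => funext fun _ => mul_left_comm _ _ _ }
  mul_eq g h := by
    refine LinearMap.ext fun f => funext fun i => ?_
    obtain ⟨k, hk⟩ : ∃ k, g * h * k = e.symm i := ⟨(g * h)⁻¹ * e.symm i, by group⟩
    have hcocycle := congrArg Units.val (hψ g h k)
    simp only [Units.val_mul] at hcocycle
    simp only [Module.End.mul_apply, LinearMap.coe_mk, AddHom.coe_mk, LinearMap.smul_apply,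
      Pi.smul_apply, smul_eq_mul, Equiv.symm_apply_apply, ← hk, mul_inv_rev, mul_assoc,
      inv_mul_cancel_left]
    linear_combination f (e k) * hcocycle.symm
  one_eq := by
    refine LinearMap.ext fun f => funext fun i => ?_
    simp [hψ.map_one_left]

variable (hψ : IsTwoCocycle ψ) {ι : Type} [Fintype ι] [DecidableEq ι] (e : G ≃ ι)

theorem regular_rho_self_single_one (g : G) :
    (regular ψ hψ e).ρ g (Pi.single (e 1) 1) (e g) = ψ g 1 := by
  simp

theorem regular_rho_single_one_of_ne {y g : G} (hyg : y ≠ g) :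
    (regular ψ hψ e).ρ y (Pi.single (e 1) 1) (e g) = 0 := by
  simp [inv_mul_eq_one, hyg]

theorem regular_conjSum_rho_ne_zero [Fintype G] {g : G} (hg : IsPsiRegular ψ g) :
    (regular ψ hψ e).conjSum ((regular ψ hψ e).ρ g) ≠ 0 := by
  classical
  set τ := regular ψ hψ e
  have hentry (h : G) : τ.conj h (τ.ρ g) (Pi.single (e 1) 1) (e g) =
      if h ∈ Subgroup.centralizer {g} then (ψ g 1 : ℂ) else 0 := by
    rw [conj_rho, LinearMap.smul_apply, Pi.smul_apply]
    by_cases hh : h ∈ Subgroup.centralizer {g}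
    · have hc : h * g * h⁻¹ = g := by
        rw [Subgroup.mem_centralizer_singleton_iff.1 hh, mul_inv_cancel_right]
      rw [if_pos hh, hc, hg h hh, div_self (by simp), one_smul, regular_rho_self_single_one]
    · have hc : h * g * h⁻¹ ≠ g := fun hc =>
        hh (Subgroup.mem_centralizer_singleton_iff.2 (mul_inv_eq_iff_eq_mul.1 hc))
      rw [if_neg hh, regular_rho_single_one_of_ne hψ e hc, smul_zero]
  have hcard : (Finset.univ.filter (· ∈ Subgroup.centralizer {g})).Nonempty :=
    ⟨1, Finset.mem_filter.2 ⟨Finset.mem_univ _, Subgroup.one_mem _⟩⟩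
  intro h0
  have hzero := congrFun (LinearMap.congr_fun h0 (Pi.single (e 1) 1)) (e g)
  rw [conjSum, LinearMap.sum_apply, Finset.sum_apply, Finset.sum_congr rfl fun h _ => hentry h,
    Finset.sum_ite, Finset.sum_const_zero, add_zero, Finset.sum_const, nsmul_eq_mul]
    at hzero
  exact mul_ne_zero (Nat.cast_ne_zero.2 hcard.card_pos.ne') (Units.ne_zero _) (hzero.trans rfl)

end Regular

end TwistedGroupAlgebraModule

/-- An element `g` of a finite group `G` is `ψ`-regular if and only if
`χ_τ(g) ≠ 0` for some finite-dimensional irreducible `ℂ_ψ G`-module `τ`. -/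
theorem isPsiRegular_iff_exists_irreducible_char_ne_zero {G : Type*} [Group G]
    [Finite G] (ψ : G → G → ℂˣ) (hψ : IsTwoCocycle ψ) (g : G) :
    IsPsiRegular ψ g ↔
      ∃ τ : TwistedGroupAlgebraModule G ψ, τ.Irreducible ∧ τ.char g ≠ 0 := by
  have := Fintype.ofFinite G
  refine ⟨fun hg => ?_, fun ⟨τ, _, hχ⟩ => τ.isPsiRegular_of_char_ne_zero hχ⟩
  exact TwistedGroupAlgebraModule.exists_irreducible_char_ne_zero_of_conjSum_ne_zero _
    (TwistedGroupAlgebraModule.regular_conjSum_rho_ne_zero hψ (Finite.equivFin G) hg)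
end

section
/- Let G be a finite group and ψ a class-function 2-cocycle on G with values in ℂˣ. Let C̃₁, …, C̃ₜ be the conjugacy classes of G consisting of ψ-regular elements, and for each i let k_i = Σ_{g ∈ C̃_i} g, the corresponding class sum in the twisted group algebra ℂ_ψG. Then {k₁, …, kₜ} is a basis of the center of ℂ_ψG. -/
/-- `ψ` is a class-function cocycle if the character of every finite-dimensional
`ℂ_ψ G`-module is constant on conjugacy classes. -/
def IsClassFunctionCocycle {G : Type*} [Group G] (ψ : G → G → ℂˣ) : Prop :=
  ∀ τ : TwistedGroupAlgebraModule G ψ, ∀ g x : G, τ.char (x * g * x⁻¹) = τ.char g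

/-!
Comparing coefficients in `b h * z = z * b h` shows that `z` is central iff
`ψ(huh⁻¹, h) z(huh⁻¹) = ψ(h, u) z(u)` for all `h, u`. Taking `h` in the centralizer of a
non-regular `u` shows that central elements vanish on non-regular classes. For a regular `g`,
every module satisfies `ψ(xgx⁻¹, x) χ(g) = ψ(x, g) χ(xgx⁻¹)`, so the class-function hypothesis
gives `ψ(xgx⁻¹, x) = ψ(x, g)` as soon as some module has `χ(g) ≠ 0`. Such a module exists:
left multiplication by `b g` followed by right multiplication by `b g⁻¹` has trace
`|C_G(g)| ψ(g, g⁻¹) ψ(1, 1) ≠ 0`, so `b g` has nonzero trace on some generalized eigenspace of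
right multiplication by `b g⁻¹`, which is a left ideal. Hence central elements have constant
coefficients on regular classes, and the class sums of regular classes are central.
-/

open LinearMap Module

namespace IsTwoCocycle

variable {G : Type*} [Group G] {ψ : G → G → ℂˣ}

theorem one_left (hψ : IsTwoCocycle ψ) (g : G) : ψ 1 g = ψ 1 1 := by
  simpa using (hψ 1 1 g).symm

theorem one_right (hψ : IsTwoCocycle ψ) (g : G) : ψ g 1 = ψ 1 1 := by
  simpa [mul_comm] using hψ g 1 1

theorem inv_comm (hψ : IsTwoCocycle ψ) (g : G) : ψ g g⁻¹ = ψ g⁻¹ g := by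
  simpa [hψ.one_left, hψ.one_right] using hψ g g⁻¹ g

theorem mul_mul_inv_of_mem_centralizer (hψ : IsTwoCocycle ψ) {g u : G}
    (hg : IsPsiRegular ψ g) (hu : u ∈ Subgroup.centralizer {g}) :
    ψ g u * ψ (g * u) g⁻¹ = ψ g g⁻¹ * ψ 1 1 := by
  have hgu : g * u = u * g := (Subgroup.mem_centralizer_singleton_iff.mp hu).symm
  rw [← hψ.one_right u, hg u hu, hgu, hψ u g g⁻¹, mul_inv_cancel]

end IsTwoCocycle

namespace TwistedGroupAlgebraModule

variable {G : Type*} [Group G] {ψ : G → G → ℂˣ}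

/-- The carrier of a `TwistedGroupAlgebraModule` lives in `Type`, so `V` is transported to
`Fin (finrank ℂ V) → ℂ`. -/
noncomputable def ofEnd {V : Type*} [AddCommGroup V] [Module ℂ V] [FiniteDimensional ℂ V]
    (ρ : G → End ℂ V) (mul_eq : ∀ g h : G, ρ g * ρ h = (ψ g h : ℂ) • ρ (g * h))
    (one_eq : ρ 1 = (ψ 1 1 : ℂ) • 1) : TwistedGroupAlgebraModule G ψ where
  V := Fin (finrank ℂ V) → ℂ
  ρ g := (finBasis ℂ V).equivFun.conj (ρ g)
  mul_eq g h := by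
    rw [End.mul_eq_comp, ← LinearEquiv.conj_comp, ← End.mul_eq_comp, mul_eq, map_smul]
  one_eq := by
    rw [one_eq, map_smul, End.one_eq_id, LinearEquiv.conj_id, ← End.one_eq_id]

theorem char_ofEnd {V : Type*} [AddCommGroup V] [Module ℂ V] [FiniteDimensional ℂ V]
    (ρ : G → End ℂ V) (mul_eq : ∀ g h : G, ρ g * ρ h = (ψ g h : ℂ) • ρ (g * h))
    (one_eq : ρ 1 = (ψ 1 1 : ℂ) • 1) (g : G) :
    (ofEnd ρ mul_eq one_eq).char g = trace ℂ V (ρ g) :=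
  trace_conj' (ρ g) _

theorem psi_conj_mul_char (τ : TwistedGroupAlgebraModule G ψ) (hψ : IsTwoCocycle ψ) (x g : G) :
    (ψ (x * g * x⁻¹) x : ℂ) * τ.char g = ψ x g * τ.char (x * g * x⁻¹) := by
  have hunit : ∀ y z : G, y * z = 1 → τ.ρ y * τ.ρ z = ((ψ y z : ℂ) * ψ 1 1) • 1 := by
    intro y z hyz
    rw [τ.mul_eq, hyz, τ.one_eq, smul_smul]
  have hconj : (ψ (x * g * x⁻¹) x : ℂ) • (τ.ρ x * τ.ρ g) =
      (ψ x g : ℂ) • (τ.ρ (x * g * x⁻¹) * τ.ρ x) := by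
    rw [τ.mul_eq, τ.mul_eq, smul_smul, smul_smul, mul_comm, inv_mul_cancel_right]
  have hpsi : (ψ x⁻¹ x : ℂ) * ψ 1 1 ≠ 0 := mul_ne_zero (Units.ne_zero _) (Units.ne_zero _)
  refine mul_left_cancel₀ hpsi ?_
  calc (ψ x⁻¹ x : ℂ) * ψ 1 1 * ((ψ (x * g * x⁻¹) x : ℂ) * τ.char g)
      = ψ (x * g * x⁻¹) x * trace ℂ τ.V (τ.ρ x * τ.ρ g * τ.ρ x⁻¹) := by
        rw [trace_mul_comm, ← mul_assoc (τ.ρ x⁻¹), hunit _ _ (inv_mul_cancel x),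
          smul_mul_assoc, one_mul, map_smul, smul_eq_mul, char]
        ring
    _ = ψ x g * trace ℂ τ.V (τ.ρ (x * g * x⁻¹) * τ.ρ x * τ.ρ x⁻¹) := by
        rw [← smul_eq_mul, ← map_smul, ← smul_mul_assoc, hconj, smul_mul_assoc, map_smul,
          smul_eq_mul]
    _ = (ψ x⁻¹ x : ℂ) * ψ 1 1 * ((ψ x g : ℂ) * τ.char (x * g * x⁻¹)) := by
        rw [mul_assoc, hunit _ _ (mul_inv_cancel x), mul_smul_comm, mul_one, map_smul,
          smul_eq_mul, char, hψ.inv_comm]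
        ring

end TwistedGroupAlgebraModule

section TwistedGroupAlgebra

variable {G : Type*} [Group G] {ψ : G → G → ℂˣ} {A : Type*} [Ring A] [Algebra ℂ A]
  {b : Basis G ℂ A}

theorem basis_one_eq (hb : ∀ g h : G, b g * b h = (ψ g h : ℂ) • b (g * h))
    (hψ : IsTwoCocycle ψ) : b 1 = (ψ 1 1 : ℂ) • 1 := by
  have h : mulLeft ℂ (b 1) = (ψ 1 1 : ℂ) • LinearMap.id :=
    b.ext fun u => by simp [hb, hψ.one_left]
  simpa using LinearMap.congr_fun h 1

theorem repr_basis_mul (hb : ∀ g h : G, b g * b h = (ψ g h : ℂ) • b (g * h)) (h u : G) (z : A) :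
    b.repr (b h * z) (h * u) = ψ h u * b.repr z u := by
  have : b.coord (h * u) ∘ₗ mulLeft ℂ (b h) = (ψ h u : ℂ) • b.coord u :=
    b.ext fun v => by by_cases hv : v = u <;> simp [hb, hv]
  exact LinearMap.congr_fun this z

theorem repr_mul_basis (hb : ∀ g h : G, b g * b h = (ψ g h : ℂ) • b (g * h)) (h u : G) (z : A) :
    b.repr (z * b h) (u * h) = ψ u h * b.repr z u := by
  have : b.coord (u * h) ∘ₗ mulRight ℂ (b h) = (ψ u h : ℂ) • b.coord u :=
    b.ext fun v => by by_cases hv : v = u <;> simp [hb, hv]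
  exact LinearMap.congr_fun this z

theorem mem_center_iff_repr (hb : ∀ g h : G, b g * b h = (ψ g h : ℂ) • b (g * h)) {z : A} :
    z ∈ Subalgebra.center ℂ A ↔
      ∀ h u : G, (ψ (h * u * h⁻¹) h : ℂ) * b.repr z (h * u * h⁻¹) = ψ h u * b.repr z u := by
  have hcomm : ∀ h : G, b h * z = z * b h ↔
      ∀ u : G, (ψ (h * u * h⁻¹) h : ℂ) * b.repr z (h * u * h⁻¹) = ψ h u * b.repr z u := by
    intro h
    rw [b.ext_elem_iff, (mul_left_surjective h).forall]
    refine forall_congr' fun u => ?_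
    rw [repr_basis_mul hb, ← repr_mul_basis hb, inv_mul_cancel_right, eq_comm]
  simp_rw [← hcomm]
  refine ⟨fun hz h => (Subalgebra.mem_center_iff.mp hz (b h)), fun H => ?_⟩
  have : mulRight ℂ z = mulLeft ℂ z := b.ext H
  exact Subalgebra.mem_center_iff.mpr (LinearMap.congr_fun this)

theorem trace_mulLeft_comp_mulRight_inv_ne_zero [Finite G]
    (hb : ∀ g h : G, b g * b h = (ψ g h : ℂ) • b (g * h)) (hψ : IsTwoCocycle ψ) {g : G}
    (hg : IsPsiRegular ψ g) : trace ℂ A (mulLeft ℂ (b g) ∘ₗ mulRight ℂ (b g⁻¹)) ≠ 0 := by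
  classical
  cases nonempty_fintype G
  have hdiag : ∀ u : G, b.repr (b g * (b u * b g⁻¹)) u =
      if u ∈ Subgroup.centralizer {g} then (ψ g g⁻¹ : ℂ) * ψ 1 1 else 0 := by
    intro u
    rw [← mul_assoc, hb, smul_mul_assoc, hb, smul_smul, map_smul, b.repr_self,
      Finsupp.smul_apply, Finsupp.single_apply, Subgroup.mem_centralizer_singleton_iff,
      eq_comm (a := u * g), mul_inv_eq_iff_eq_mul]
    split_ifs with hu
    · rw [← Units.val_mul, hψ.mul_mul_inv_of_mem_centralizer hg
        (Subgroup.mem_centralizer_singleton_iff.mpr hu.symm), Units.val_mul, smul_eq_mul, mul_one]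
    · exact smul_zero _
  rw [trace_eq_matrix_trace ℂ b, Matrix.trace]
  simp only [Matrix.diag_apply, toMatrix_apply, comp_apply, mulLeft_apply, mulRight_apply, hdiag]
  rw [Finset.sum_ite, Finset.sum_const_zero, add_zero, Finset.sum_const, nsmul_eq_mul]
  refine mul_ne_zero ?_ (mul_ne_zero (Units.ne_zero _) (Units.ne_zero _))
  exact Nat.cast_ne_zero.mpr (Finset.card_ne_zero.mpr ⟨1, by simp⟩)

theorem exists_char_ne_zero_of_isPsiRegular [Finite G]
    (hb : ∀ g h : G, b g * b h = (ψ g h : ℂ) • b (g * h)) (hψ : IsTwoCocycle ψ) {g : G}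
    (hg : IsPsiRegular ψ g) : ∃ τ : TwistedGroupAlgebraModule G ψ, τ.char g ≠ 0 := by
  have : FiniteDimensional ℂ A := .of_basis b
  let R : End ℂ A := mulRight ℂ (b g⁻¹)
  have hcomm : ∀ u, Commute R (mulLeft ℂ (b u)) := fun u =>
    (commute_mulLeft_right (b u) (b g⁻¹)).symm
  obtain ⟨μ, hμ⟩ : ∃ μ, trace ℂ _
      ((mulLeft ℂ (b g)).restrict (R.mapsTo_maxGenEigenspace_of_comm (hcomm g) μ)) ≠ 0 := by
    by_contra! h
    exact trace_mulLeft_comp_mulRight_inv_ne_zero hb hψ hg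
      (trace_comp_eq_zero_of_commute_of_trace_restrict_eq_zero (hcomm g)
        R.iSup_maxGenEigenspace_eq_top h)
  let ρ : G → End ℂ (R.maxGenEigenspace μ) := fun u =>
    (mulLeft ℂ (b u)).restrict (R.mapsTo_maxGenEigenspace_of_comm (hcomm u) μ)
  refine ⟨TwistedGroupAlgebraModule.ofEnd ρ (fun u v => ?_) ?_, ?_⟩
  · ext w
    change b u * (b v * (w : A)) = (ψ u v : ℂ) • (b (u * v) * w)
    rw [← mul_assoc, hb, smul_mul_assoc]
  · ext w
    simp [ρ, basis_one_eq hb hψ]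
  · rwa [TwistedGroupAlgebraModule.char_ofEnd]

theorem IsClassFunctionCocycle.psi_conj_eq [Finite G] (hcf : IsClassFunctionCocycle ψ)
    (hb : ∀ g h : G, b g * b h = (ψ g h : ℂ) • b (g * h)) (hψ : IsTwoCocycle ψ) {g : G}
    (hg : IsPsiRegular ψ g) (x : G) : ψ (x * g * x⁻¹) x = ψ x g := by
  obtain ⟨τ, hτ⟩ := exists_char_ne_zero_of_isPsiRegular hb hψ hg
  have h := τ.psi_conj_mul_char hψ x g
  rw [hcf τ g x] at h
  exact Units.ext (mul_right_cancel₀ hτ h)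

theorem repr_eq_of_isConj_of_isPsiRegular [Finite G] (hcf : IsClassFunctionCocycle ψ)
    (hb : ∀ g h : G, b g * b h = (ψ g h : ℂ) • b (g * h)) (hψ : IsTwoCocycle ψ) {z : A}
    (hz : z ∈ Subalgebra.center ℂ A) {g u : G} (hg : IsPsiRegular ψ g) (hgu : IsConj g u) :
    b.repr z u = b.repr z g := by
  obtain ⟨x, rfl⟩ := isConj_iff.mp hgu
  have h := (mem_center_iff_repr hb).mp hz x g
  rw [hcf.psi_conj_eq hb hψ hg x] at h
  exact mul_left_cancel₀ (Units.ne_zero _) h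

theorem repr_eq_zero_of_isConj_of_not_isPsiRegular
    (hb : ∀ g h : G, b g * b h = (ψ g h : ℂ) • b (g * h)) {z : A}
    (hz : z ∈ Subalgebra.center ℂ A) {g u : G} (hg : ¬ IsPsiRegular ψ g) (hgu : IsConj g u) :
    b.repr z u = 0 := by
  have hcenter := (mem_center_iff_repr hb).mp hz
  have hzg : b.repr z g = 0 := by
    obtain ⟨h, hh, hne⟩ : ∃ h ∈ Subgroup.centralizer {g}, ψ g h ≠ ψ h g := by
      simpa [IsPsiRegular] using hg
    have hcomm := hcenter h g
    rw [mul_inv_eq_of_eq_mul (Subgroup.mem_centralizer_singleton_iff.mp hh)] at hcomm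
    by_contra hzg
    exact hne (Units.ext (mul_right_cancel₀ hzg hcomm))
  obtain ⟨x, rfl⟩ := isConj_iff.mp hgu
  have hcomm := hcenter x g
  rw [hzg, mul_zero] at hcomm
  exact (mul_eq_zero.mp hcomm).resolve_left (Units.ne_zero _)

end TwistedGroupAlgebra

noncomputable def classSum {G M : Type*} [Monoid G] [Finite G] [AddCommMonoid M] (v : G → M)
    (C : ConjClasses G) : M :=
  ∑ g ∈ (Set.toFinite C.carrier).toFinset, v g

section ClassSum

variable {G : Type*} [Group G] [Finite G]

theorem repr_classSum {R M : Type*} [Semiring R] [AddCommMonoid M] [Module R M]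
    (b : Basis G R M) (C : ConjClasses G) (u : G) :
    b.repr (classSum b C) u = C.carrier.indicator 1 u := by
  classical
  simp [classSum, map_sum, Finsupp.single_apply, Set.indicator_apply]

theorem linearIndependent_classSum {R M : Type*} [Ring R] [AddCommGroup M] [Module R M]
    (b : Basis G R M) : LinearIndependent R (classSum b) := by
  classical
  rw [linearIndependent_iff']
  intro s c hs C hC
  obtain ⟨g, rfl⟩ := ConjClasses.mk_surjective C
  have h := congrArg (fun z => b.repr z g) hs
  simpa [map_sum, repr_classSum, Set.indicator_apply, ConjClasses.mem_carrier_iff_mk_eq, hC]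
    using h

variable {ψ : G → G → ℂˣ} {A : Type*} [Ring A] [Algebra ℂ A] {b : Basis G ℂ A}

theorem classSum_mem_center (hcf : IsClassFunctionCocycle ψ)
    (hb : ∀ g h : G, b g * b h = (ψ g h : ℂ) • b (g * h)) (hψ : IsTwoCocycle ψ)
    {C : ConjClasses G} (hC : ∀ g ∈ C.carrier, IsPsiRegular ψ g) :
    classSum b C ∈ Subalgebra.center ℂ A := by
  refine (mem_center_iff_repr hb).mpr fun h u => ?_
  have hmem : h * u * h⁻¹ ∈ C.carrier ↔ u ∈ C.carrier := by
    rw [ConjClasses.mem_carrier_iff_mk_eq, ConjClasses.mem_carrier_iff_mk_eq,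
      ← ConjClasses.mk_eq_mk_iff_isConj.mpr (isConj_iff.mpr ⟨h, rfl⟩)]
  rw [repr_classSum, repr_classSum]
  by_cases hu : u ∈ C.carrier
  · rw [Set.indicator_of_mem (hmem.mpr hu), Set.indicator_of_mem hu,
      hcf.psi_conj_eq hb hψ (hC u hu), Pi.one_apply, Pi.one_apply]
  · rw [Set.indicator_of_notMem (hmem.not.mpr hu), Set.indicator_of_notMem hu, mul_zero,
      mul_zero]

theorem sum_repr_smul_mem_span_classSum (hcf : IsClassFunctionCocycle ψ)
    (hb : ∀ g h : G, b g * b h = (ψ g h : ℂ) • b (g * h)) (hψ : IsTwoCocycle ψ) {z : A}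
    (hz : z ∈ Subalgebra.center ℂ A) (g : G) :
    ∑ u ∈ (Set.toFinite (ConjClasses.mk g).carrier).toFinset, b.repr z u • b u ∈
      Submodule.span ℂ (Set.range fun C : {C : ConjClasses G // ∀ g ∈ C.carrier,
        IsPsiRegular ψ g} => classSum b C.1) := by
  have hconj : ∀ u ∈ (Set.toFinite (ConjClasses.mk g).carrier).toFinset, IsConj g u :=
    fun u hu => ConjClasses.mk_eq_mk_iff_isConj.mp
      (ConjClasses.mem_carrier_iff_mk_eq.mp ((Set.Finite.mem_toFinset _).mp hu)).symm
  by_cases hreg : ∀ u ∈ (ConjClasses.mk g).carrier, IsPsiRegular ψ u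
  · have hsum : ∑ u ∈ (Set.toFinite (ConjClasses.mk g).carrier).toFinset, b.repr z u • b u
        = b.repr z g • classSum b (ConjClasses.mk g) := by
      rw [classSum, Finset.smul_sum]
      refine Finset.sum_congr rfl fun u hu => ?_
      rw [repr_eq_of_isConj_of_isPsiRegular hcf hb hψ hz (hreg g ConjClasses.mem_carrier_mk)
        (hconj u hu)]
    rw [hsum]
    exact Submodule.smul_mem _ _ (Submodule.subset_span ⟨⟨_, hreg⟩, rfl⟩)
  · push Not at hreg
    obtain ⟨g', hg'C, hg'⟩ := hreg
    have hg'g : IsConj g' g :=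
      ConjClasses.mk_eq_mk_iff_isConj.mp (ConjClasses.mem_carrier_iff_mk_eq.mp hg'C)
    rw [Finset.sum_eq_zero fun u hu => by
      rw [repr_eq_zero_of_isConj_of_not_isPsiRegular hb hz hg' (hg'g.trans (hconj u hu)),
        zero_smul]]
    exact Submodule.zero_mem _

theorem center_le_span_classSum (hcf : IsClassFunctionCocycle ψ)
    (hb : ∀ g h : G, b g * b h = (ψ g h : ℂ) • b (g * h)) (hψ : IsTwoCocycle ψ) :
    Subalgebra.toSubmodule (Subalgebra.center ℂ A) ≤
      Submodule.span ℂ (Set.range fun C : {C : ConjClasses G // ∀ g ∈ C.carrier,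
        IsPsiRegular ψ g} => classSum b C.1) := by
  classical
  cases nonempty_fintype G
  intro z hz
  have hfiber : ∀ C : ConjClasses G,
      Finset.univ.filter (ConjClasses.mk · = C) = (Set.toFinite C.carrier).toFinset := by
    intro C
    ext
    simp [ConjClasses.mem_carrier_iff_mk_eq]
  rw [← b.sum_repr z, ← Finset.sum_fiberwise Finset.univ ConjClasses.mk]
  refine Submodule.sum_mem _ fun C _ => ?_
  obtain ⟨g, rfl⟩ := ConjClasses.mk_surjective C
  rw [hfiber]
  exact sum_repr_smul_mem_span_classSum hcf hb hψ hz g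

end ClassSum

/-- Let `G` be a finite group, `ψ` a class-function 2-cocycle on `G`, and let
`A` be the twisted group algebra `ℂ_ψ G`, presented as a `ℂ`-algebra with a
basis `b` indexed by `G` satisfying `b g * b h = ψ(g,h) • b (g h)`.  Then the
class sums `k_C = ∑_{g ∈ C} b g`, where `C` ranges over the `ψ`-regular
conjugacy classes of `G`, form a basis of the center of `A`. -/
theorem classSums_basis_of_center {G : Type*} [Group G] [Finite G]
    (ψ : G → G → ℂˣ) (hψ : IsTwoCocycle ψ) (hcf : IsClassFunctionCocycle ψ)
    (A : Type*) [Ring A] [Algebra ℂ A] (b : Module.Basis G ℂ A)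
    (hb : ∀ g h : G, b g * b h = (ψ g h : ℂ) • b (g * h)) :
    LinearIndependent ℂ
      (fun C : {C : ConjClasses G // ∀ g ∈ C.carrier, IsPsiRegular ψ g} =>
        ∑ g ∈ (Set.toFinite (C : ConjClasses G).carrier).toFinset, b g) ∧
    Submodule.span ℂ
      (Set.range
        (fun C : {C : ConjClasses G // ∀ g ∈ C.carrier, IsPsiRegular ψ g} =>
          ∑ g ∈ (Set.toFinite (C : ConjClasses G).carrier).toFinset, b g)) =
      Subalgebra.toSubmodule (Subalgebra.center ℂ A) := by
  refine ⟨(linearIndependent_classSum b).comp _ Subtype.val_injective,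
    le_antisymm ?_ (center_le_span_classSum hcf hb hψ)⟩
  rw [Submodule.span_le]
  rintro _ ⟨C, rfl⟩
  exact classSum_mem_center hcf hb hψ C.2
end

section
/- Let D be a finite dihedral group of order 2n (n ≥ 1), generated by a rotation r of order n and a reflection s with s² = 1 and s·r·s = r⁻¹, and let ψ be a 2-cocycle on D with values in ℂˣ. If some reflection of D (i.e., an element of the form s·rᵏ) is ψ-regular, then ψ is a coboundary. -/
/-- A 2-cocycle is a coboundary if it is cohomologous to the trivial cocycle. -/
def IsCoboundary {G : Type*} [Group G] (ψ : G → G → ℂˣ) : Prop :=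
  ∃ μ : G → ℂˣ, ∀ g h : G, ψ g h = μ g * μ h * (μ (g * h))⁻¹

/-!
A 2-cocycle `ψ` on `G` is a coboundary exactly when the central extension `ℂˣ ×_ψ G` it defines
splits. For the dihedral group, a splitting is the same as lifts `B` of `r` and `S` of a
reflection satisfying the dihedral relations. Since `ℂˣ` is divisible, there are lifts `A`, `S`
with `Aⁿ = 1` and `S² = 1`; then `S A S⁻¹ = ε A⁻¹` with `ε` central and `εⁿ = 1`, and
`B = γ⁻¹ A` works for any `γ` with `γ² = ε` and `γⁿ = 1`. For odd `n` take `γ = ε^((n+1)/2)`.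
For `n = 2m` the rotation `rᵐ` is central, so regularity of the reflection makes `S` commute
with `Aᵐ`, which forces `εᵐ = 1`, and any square root of `ε` works.
-/

lemma IsAlgClosed.exists_units_pow_eq {K : Type*} [Field K] [IsAlgClosed K] (a : Kˣ) {m : ℕ}
    (hm : m ≠ 0) : ∃ b : Kˣ, b ^ m = a := by
  obtain ⟨z, hz⟩ := IsAlgClosed.exists_pow_nat_eq (a : K) (Nat.pos_of_ne_zero hm)
  have hz0 : z ≠ 0 := by
    rintro rfl
    exact a.ne_zero (by rw [← hz, zero_pow hm])
  exact ⟨Units.mk0 z hz0, Units.ext (by simpa using hz)⟩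

lemma IsAlgClosed.exists_sq_eq_and_pow_eq_one {K : Type*} [Field K] [IsAlgClosed K] {n : ℕ}
    {ε : Kˣ} (hεn : ε ^ n = 1) (hhalf : ∀ m, n = m + m → ε ^ m = 1) :
    ∃ γ : Kˣ, γ ^ 2 = ε ∧ γ ^ n = 1 := by
  obtain ⟨m, rfl | rfl⟩ := n.even_or_odd'
  · obtain ⟨γ, hγ⟩ := IsAlgClosed.exists_units_pow_eq ε two_ne_zero
    exact ⟨γ, hγ, by rw [pow_mul, hγ, hhalf m (two_mul m)]⟩
  · refine ⟨ε ^ (m + 1), ?_, ?_⟩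
    · rw [← pow_mul, show (m + 1) * 2 = 2 * m + 1 + 1 by ring, pow_succ, hεn, one_mul]
    · rw [← pow_mul, mul_comm, pow_mul, hεn, one_pow]

structure TwoCocycle (G : Type*) [Group G] where
  toFun : G → G → ℂˣ
  isTwoCocycle : IsTwoCocycle toFun

namespace TwoCocycle

variable {G : Type*} [Group G]

instance : CoeFun (TwoCocycle G) (fun _ => G → G → ℂˣ) := ⟨toFun⟩

@[ext]
structure Extension (c : TwoCocycle G) where
  coeff : ℂˣ
  base : G

variable (c : TwoCocycle G)

lemma map_one_left (g : G) : c 1 g = c 1 1 := by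
  have h := c.isTwoCocycle 1 1 g
  rw [one_mul, one_mul, mul_comm] at h
  exact (mul_left_cancel h).symm

lemma map_one_right (g : G) : c g 1 = c 1 1 := by
  have h := c.isTwoCocycle g 1 1
  rw [mul_one, mul_one] at h
  exact mul_right_cancel h

namespace Extension

variable {c}

instance : Mul c.Extension := ⟨fun x y => ⟨x.coeff * y.coeff * c x.base y.base, x.base * y.base⟩⟩
instance : One c.Extension := ⟨⟨(c 1 1)⁻¹, 1⟩⟩
instance : Inv c.Extension :=
  ⟨fun x => ⟨(x.coeff * c x.base⁻¹ x.base * c 1 1)⁻¹, x.base⁻¹⟩⟩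

@[simp] lemma mul_coeff (x y : c.Extension) :
    (x * y).coeff = x.coeff * y.coeff * c x.base y.base := rfl
@[simp] lemma mul_base (x y : c.Extension) : (x * y).base = x.base * y.base := rfl
@[simp] lemma one_coeff : (1 : c.Extension).coeff = (c 1 1)⁻¹ := rfl
@[simp] lemma one_base : (1 : c.Extension).base = 1 := rfl
@[simp] lemma inv_coeff (x : c.Extension) :
    x⁻¹.coeff = (x.coeff * c x.base⁻¹ x.base * c 1 1)⁻¹ := rfl
@[simp] lemma inv_base (x : c.Extension) : x⁻¹.base = x.base⁻¹ := rfl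

instance : Group c.Extension :=
  Group.ofLeftAxioms
    (fun x y z => by
      refine Extension.ext ?_ (mul_assoc _ _ _)
      calc (x * y * z).coeff
          = x.coeff * y.coeff * z.coeff * (c x.base y.base * c (x.base * y.base) z.base) := by
            simp only [mul_coeff, mul_base]; ac_rfl
        _ = x.coeff * y.coeff * z.coeff * (c y.base z.base * c x.base (y.base * z.base)) := by
            rw [c.isTwoCocycle]
        _ = (x * (y * z)).coeff := by simp only [mul_coeff, mul_base]; ac_rfl)
    (fun x => Extension.ext (by simp [c.map_one_left]) (one_mul _))
    (fun x => Extension.ext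
      (by simp only [mul_coeff, inv_coeff, one_coeff, inv_base]; group) (inv_mul_cancel _))

def baseHom : c.Extension →* G where
  toFun := base
  map_one' := rfl
  map_mul' _ _ := rfl

@[simp] lemma pow_base (x : c.Extension) (m : ℕ) : (x ^ m).base = x.base ^ m :=
  map_pow baseHom x m

@[simp] lemma zpow_base (x : c.Extension) (m : ℤ) : (x ^ m).base = x.base ^ m :=
  map_zpow baseHom x m

def inl : ℂˣ →* c.Extension where
  toFun a := ⟨a * (c 1 1)⁻¹, 1⟩
  map_one' := by ext1 <;> simp
  map_mul' a b := by
    ext1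
    · simp [mul_assoc, mul_left_comm]
    · simp

@[simp] lemma inl_coeff (a : ℂˣ) : (inl a : c.Extension).coeff = a * (c 1 1)⁻¹ := rfl
@[simp] lemma inl_base (a : ℂˣ) : (inl a : c.Extension).base = 1 := rfl

lemma inl_mul (a : ℂˣ) (x : c.Extension) : inl a * x = ⟨a * x.coeff, x.base⟩ := by
  ext1
  · simp only [mul_coeff, inl_coeff, inl_base, c.map_one_left, mul_right_comm _ _ x.coeff,
      inv_mul_cancel_right]
  · simp

lemma commute_inl (a : ℂˣ) (x : c.Extension) : Commute (inl a) x := by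
  refine (inl_mul a x).trans (Extension.ext ?_ ?_)
  · simp [c.map_one_right, mul_comm, mul_left_comm]
  · simp

lemma inl_injective : Function.Injective (inl : ℂˣ →* c.Extension) := fun a b h => by
  simpa using congrArg coeff h

lemma mk_eq_inl_mul (a : ℂˣ) (g : G) : (⟨a, g⟩ : c.Extension) = inl a * ⟨1, g⟩ := by
  simp [inl_mul]

lemma exists_eq_inl_mul_of_base_eq {x y : c.Extension} (h : x.base = y.base) :
    ∃ a, x = inl a * y :=
  ⟨x.coeff / y.coeff, by rw [inl_mul, div_mul_cancel, ← h]⟩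

lemma exists_inl_eq_of_base_eq_one {x : c.Extension} (h : x.base = 1) : ∃ a, x = inl a := by
  simpa using exists_eq_inl_mul_of_base_eq (y := 1) h

lemma commute_of_isPsiRegular {x y : c.Extension} (hx : IsPsiRegular c x.base)
    (hy : y.base ∈ Subgroup.centralizer {x.base}) : Commute x y := by
  obtain ⟨a, g⟩ := x
  obtain ⟨b, h⟩ := y
  have hgh : Commute (⟨1, g⟩ : c.Extension) ⟨1, h⟩ :=
    Extension.ext (by simp [hx h hy]) (Subgroup.mem_centralizer_singleton_iff.mp hy).symm
  rw [mk_eq_inl_mul a, mk_eq_inl_mul b]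
  exact (commute_inl _ _).mul_left ((commute_inl _ _).symm.mul_right hgh)

lemma exists_base_eq_pow_eq_one {m : ℕ} (hm : m ≠ 0) {g : G} (hg : g ^ m = 1) :
    ∃ y : c.Extension, y.base = g ∧ y ^ m = 1 := by
  obtain ⟨a, ha⟩ := exists_inl_eq_of_base_eq_one (x := (⟨1, g⟩ : c.Extension) ^ m)
    (by rwa [pow_base])
  obtain ⟨b, hb⟩ := IsAlgClosed.exists_units_pow_eq a⁻¹ hm
  refine ⟨inl b * ⟨1, g⟩, by simp, ?_⟩
  rw [(commute_inl b _).mul_pow, ha, ← map_pow, hb, ← map_mul, inv_mul_cancel, map_one]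

end Extension

lemma isCoboundary_of_section (σ : G →* c.Extension) (hσ : ∀ g, (σ g).base = g) :
    IsCoboundary c := by
  refine ⟨fun g => (σ g).coeff⁻¹, fun g h => ?_⟩
  have hmul := congrArg Extension.coeff (σ.map_mul g h)
  rw [Extension.mul_coeff, hσ, hσ] at hmul
  dsimp only
  rw [inv_inv, hmul, ← mul_inv, inv_mul_cancel_left]

end TwoCocycle

section Dihedral

variable {H : Type*} [Group H] {n : ℕ}

lemma zpow_eq_zpow_of_intCast_eq {b : H} (hb : b ^ n = 1) {i j : ℤ}
    (h : (i : ZMod n) = j) : b ^ i = b ^ j :=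
  zpow_eq_zpow_iff_modEq.mpr <| ((ZMod.intCast_eq_intCast_iff i j n).mp h).of_dvd <|
    Int.natCast_dvd_natCast.mpr (orderOf_dvd_of_pow_eq_one hb)

structure DihedralRelations (n : ℕ) (b s : H) : Prop where
  pow_eq_one : b ^ n = 1
  mul_self_eq_one : s * s = 1
  conj_eq_inv : s * b * s⁻¹ = b⁻¹

namespace DihedralRelations

variable {b s : H}

lemma zpow_mul (h : DihedralRelations n b s) (i : ℤ) : b ^ i * s = s * b ^ (-i) := by
  have hconj : s * b ^ (-i) * s⁻¹ = b ^ i := by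
    rw [← conj_zpow, h.conj_eq_inv, inv_zpow', neg_neg]
  rw [← hconj, inv_mul_cancel_right]

lemma mul_zpow_right (h : DihedralRelations n b s) (j : ℤ) :
    DihedralRelations n b (s * b ^ j) where
  pow_eq_one := h.pow_eq_one
  mul_self_eq_one := by
    rw [mul_assoc, ← mul_assoc (b ^ j), h.zpow_mul, mul_assoc, ← zpow_add, neg_add_cancel,
      zpow_zero, mul_one, h.mul_self_eq_one]
  conj_eq_inv := by
    rw [← h.conj_eq_inv]
    group

end DihedralRelations

namespace DihedralGroup

lemma r_mem_centralizer_sr {i : ZMod n} (hi : i + i = 0) (k : ZMod n) :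
    r i ∈ Subgroup.centralizer {sr k} := by
  rw [Subgroup.mem_centralizer_singleton_iff, r_mul_sr, sr_mul_r, sub_eq_add_neg,
    neg_eq_of_add_eq_zero_left hi]

variable [NeZero n] {b s : H}

def lift (h : DihedralRelations n b s) : DihedralGroup n →* H where
  toFun
    | r i => b ^ (i.val : ℤ)
    | sr i => s * b ^ (i.val : ℤ)
  map_one' := by simp [one_def, -r_zero]
  map_mul' := by
    have hval : ∀ (i : ZMod n) (x : ℤ), (x : ZMod n) = i → b ^ (i.val : ℤ) = b ^ x :=
      fun i x hx => zpow_eq_zpow_of_intCast_eq h.pow_eq_one (by simp [hx])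
    rintro (i | i) (j | j)
    · rw [r_mul_r]
      dsimp only
      rw [← zpow_add]
      exact hval _ _ (by simp)
    · rw [r_mul_sr]
      dsimp only
      rw [← mul_assoc, h.zpow_mul, mul_assoc, ← zpow_add]
      exact congrArg (s * ·) (hval _ _ (by simp [neg_add_eq_sub]))
    · rw [sr_mul_r]
      dsimp only
      rw [mul_assoc, ← zpow_add]
      exact congrArg (s * ·) (hval _ _ (by simp))
    · rw [sr_mul_sr]
      dsimp only
      rw [mul_assoc, ← mul_assoc _ s, h.zpow_mul, mul_assoc, ← mul_assoc, h.mul_self_eq_one,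
        one_mul, ← zpow_add]
      exact hval _ _ (by simp [neg_add_eq_sub])

@[simp] lemma lift_r (h : DihedralRelations n b s) (i : ZMod n) :
    lift h (r i) = b ^ (i.val : ℤ) := rfl

@[simp] lemma lift_sr (h : DihedralRelations n b s) (i : ZMod n) :
    lift h (sr i) = s * b ^ (i.val : ℤ) := rfl

lemma comp_lift_eq_id (h : DihedralRelations n b s) (f : H →* DihedralGroup n)
    (hb : f b = r 1) (hs : f s = sr 0) : f.comp (lift h) = MonoidHom.id _ := by
  ext (i | i) <;> simp [hb, hs]

end DihedralGroup

end Dihedral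

namespace TwoCocycle.Extension

variable {G : Type*} [Group G] {c : TwoCocycle G} {A S : c.Extension} {ε : ℂˣ}

lemma pow_eq_one_of_conj_eq (hε : S * A * S⁻¹ = inl ε * A⁻¹) {m : ℕ} (hA : A ^ (m + m) = 1)
    (hcomm : Commute S (A ^ m)) : ε ^ m = 1 := by
  have hconj : S * A ^ m * S⁻¹ = inl (ε ^ m) * (A ^ m)⁻¹ := by
    rw [← conj_pow, hε, (commute_inl ε _).mul_pow, map_pow, inv_pow]
  rw [hcomm.eq, mul_inv_cancel_right, eq_mul_inv_iff_mul_eq, ← pow_add, hA] at hconj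
  exact inl_injective (hconj.symm.trans (map_one inl).symm)

lemma dihedralRelations_of_conj_eq {n : ℕ} (hA : A ^ n = 1) (hS : S * S = 1)
    (hε : S * A * S⁻¹ = inl ε * A⁻¹) {γ : ℂˣ} (hγ : γ ^ 2 = ε) (hγn : γ ^ n = 1) :
    DihedralRelations n (inl γ⁻¹ * A) S where
  pow_eq_one := by
    rw [(commute_inl _ A).mul_pow, ← map_pow, inv_pow, hγn, hA, inv_one, map_one, one_mul]
  mul_self_eq_one := hS
  conj_eq_inv := calc
    S * (inl γ⁻¹ * A) * S⁻¹ = inl γ⁻¹ * (S * A * S⁻¹) := by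
      rw [← mul_assoc S, ← (commute_inl γ⁻¹ S).eq]
      simp only [mul_assoc]
    _ = inl γ * A⁻¹ := by rw [hε, ← mul_assoc, ← map_mul, ← hγ, sq, inv_mul_cancel_left]
    _ = (inl γ⁻¹ * A)⁻¹ := by rw [mul_inv_rev, map_inv, inv_inv, (commute_inl γ A⁻¹).eq]

end TwoCocycle.Extension

namespace TwoCocycle

open DihedralGroup Extension

variable {n : ℕ} [NeZero n] {c : TwoCocycle (DihedralGroup n)}

lemma exists_dihedralRelations_of_isPsiRegular {k : ZMod n} (hk : IsPsiRegular c (sr k)) :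
    ∃ B S : c.Extension, B.base = r 1 ∧ S.base = sr 0 ∧ DihedralRelations n B S := by
  obtain ⟨A, hAb, hA⟩ := exists_base_eq_pow_eq_one (c := c) (NeZero.ne n) r_one_pow_n
  obtain ⟨S, hSb, hS⟩ :=
    exists_base_eq_pow_eq_one (c := c) two_ne_zero ((sq _).trans (sr_mul_self k))
  obtain ⟨ε, hε⟩ : ∃ ε, S * A * S⁻¹ = inl ε * A⁻¹ :=
    exists_eq_inl_mul_of_base_eq (by simp [hAb, hSb, sr_mul_r, inv_r])
  have hεn : ε ^ n = 1 :=
    pow_eq_one_of_conj_eq hε (by rw [pow_add, hA, one_mul]) (hA ▸ Commute.one_right S)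
  have hhalf : ∀ m, n = m + m → ε ^ m = 1 := by
    intro m hm
    refine pow_eq_one_of_conj_eq hε (hm ▸ hA) (commute_of_isPsiRegular (hSb ▸ hk) ?_)
    rw [pow_base, hAb, hSb, r_one_pow]
    exact r_mem_centralizer_sr (by rw [← Nat.cast_add, ← hm, ZMod.natCast_self]) k
  obtain ⟨γ, hγ, hγn⟩ := IsAlgClosed.exists_sq_eq_and_pow_eq_one hεn hhalf
  have hrel := dihedralRelations_of_conj_eq hA (by rwa [← sq]) hε hγ hγn
  refine ⟨inl γ⁻¹ * A, S * (inl γ⁻¹ * A) ^ (-(k.val : ℤ)), by simp [hAb], ?_,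
    hrel.mul_zpow_right _⟩
  simp [hAb, hSb, sr_mul_r]

end TwoCocycle

/-- If a reflection `s rᵏ` of the dihedral group of order `2n` is `ψ`-regular
for a 2-cocycle `ψ`, then `ψ` is a coboundary. -/
theorem dihedral_reflection_regular_implies_coboundary (n : ℕ) (hn : 1 ≤ n)
    (ψ : DihedralGroup n → DihedralGroup n → ℂˣ) (hψ : IsTwoCocycle ψ)
    (h : ∃ k : ZMod n, IsPsiRegular ψ (DihedralGroup.sr k)) :
    IsCoboundary ψ := by
  have : NeZero n := ⟨by omega⟩
  obtain ⟨k, hk⟩ := h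
  let c : TwoCocycle (DihedralGroup n) := ⟨ψ, hψ⟩
  obtain ⟨B, S, hB, hS, hrel⟩ := c.exists_dihedralRelations_of_isPsiRegular hk
  have hsplit := DihedralGroup.comp_lift_eq_id hrel TwoCocycle.Extension.baseHom hB hS
  exact c.isCoboundary_of_section (DihedralGroup.lift hrel) (DFunLike.congr_fun hsplit)
end
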